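/- For a symmetric positive definite matrix P and real matrix A, trace(P^{-1} A P A') - trace(A A) = (1/2) ||P^{-1/2} A P^{1/2} - P^{1/2} A' P^{-1/2}||_F^2. In particular, equality trace(P^{-1} A P A') = trace(A A) holds if and only if P^{-1/2} A P^{1/2} is symmetric. -/

import Mathlib

/-!
Put `S = P^{1/2}` and `B = S⁻¹ A S`. Since `S` is symmetric, `Bᵀ = S Aᵀ S⁻¹`, and conjugating by `S`
does not change traces: `tr (P⁻¹ A P Aᵀ) = tr (B Bᵀ)` and `tr (A A) = tr (B B)`. Expanding the square
gives `‖B - Bᵀ‖_F² = 2 (tr (B Bᵀ) - tr (B B))`, and the Frobenius norm vanishes only at `0`.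
-/

open Matrix

/-- The symmetric positive definite square root of a positive definite matrix. -/
noncomputable def sqrtm {n : ℕ} {P : Matrix (Fin n) (Fin n) ℝ} (hP : P.PosDef) :
    Matrix (Fin n) (Fin n) ℝ :=
  hP.posSemidef.1.eigenvectorUnitary.1 * diagonal ((↑) ∘ (√·) ∘ hP.posSemidef.1.eigenvalues) *
    (star hP.posSemidef.1.eigenvectorUnitary : Matrix (Fin n) (Fin n) ℝ)

/-- Squared Frobenius norm of a real matrix. -/
noncomputable def frobSq {n : ℕ} (M : Matrix (Fin n) (Fin n) ℝ) : ℝ := (M * Mᵀ).trace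

namespace Matrix

section conj

variable {m R : Type*} [Fintype m] [DecidableEq m] [CommRing R] {S : Matrix m m R}

theorem transpose_inv_mul_mul_of_transpose_eq (hS : Sᵀ = S) (A : Matrix m m R) :
    (S⁻¹ * A * S)ᵀ = S * Aᵀ * S⁻¹ := by
  rw [transpose_mul, transpose_mul, transpose_nonsing_inv, hS, Matrix.mul_assoc]

theorem trace_inv_mul_mul_mul_self (hS : IsUnit S) (A : Matrix m m R) :
    ((S⁻¹ * A * S) * (S⁻¹ * A * S)).trace = (A * A).trace := by
  have hSS : S * S⁻¹ = 1 := mul_nonsing_inv S ((isUnit_iff_isUnit_det S).mp hS)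
  rw [← trace_conj' hS (A * A)]
  simp only [Matrix.mul_assoc]
  rw [← Matrix.mul_assoc S, hSS, Matrix.one_mul]

theorem trace_inv_sq_mul_mul_sq_mul_transpose (hS : Sᵀ = S) (A : Matrix m m R) :
    ((S * S)⁻¹ * A * (S * S) * Aᵀ).trace = ((S⁻¹ * A * S) * (S⁻¹ * A * S)ᵀ).trace := by
  rw [transpose_inv_mul_mul_of_transpose_eq hS, mul_inv_rev]
  simp only [Matrix.mul_assoc]
  rw [trace_mul_comm S⁻¹]
  simp only [Matrix.mul_assoc]

end conj

open scoped ComplexOrder in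
theorem PosDef.pos_of_mem_spectrum {m 𝕜 : Type*} [Fintype m] [DecidableEq m] [RCLike 𝕜]
    {P : Matrix m m 𝕜} (hP : P.PosDef) {x : ℝ} (hx : x ∈ spectrum ℝ P) : 0 < x := by
  rw [hP.isHermitian.spectrum_real_eq_range_eigenvalues] at hx
  obtain ⟨i, rfl⟩ := hx
  exact hP.eigenvalues_pos i

end Matrix

section frobSq

variable {n : ℕ}

theorem frobSq_eq_zero_iff (M : Matrix (Fin n) (Fin n) ℝ) : frobSq M = 0 ↔ M = 0 := by
  simpa [frobSq] using trace_mul_conjTranspose_self_eq_zero_iff (A := M)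

theorem frobSq_sub_transpose (B : Matrix (Fin n) (Fin n) ℝ) :
    frobSq (B - Bᵀ) = 2 * ((B * Bᵀ).trace - (B * B).trace) := by
  have hBtBt : (Bᵀ * Bᵀ).trace = (B * B).trace := by
    rw [← transpose_mul, trace_transpose]
  simp only [frobSq, transpose_sub, transpose_transpose, sub_mul, mul_sub, trace_sub]
  rw [hBtBt, trace_mul_comm Bᵀ B]
  ring

end frobSq

section sqrtm

variable {n : ℕ} {P : Matrix (Fin n) (Fin n) ℝ}

theorem sqrtm_eq_cfc (hP : P.PosDef) : sqrtm hP = cfc Real.sqrt P := by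
  rw [hP.isHermitian.cfc_eq, IsHermitian.cfc, Unitary.conjStarAlgAut_apply]
  rfl

theorem sqrtm_mul_self (hP : P.PosDef) : sqrtm hP * sqrtm hP = P := by
  have hspec : ∀ x ∈ spectrum ℝ P, √x * √x = x := fun x hx =>
    Real.mul_self_sqrt (hP.pos_of_mem_spectrum hx).le
  rw [sqrtm_eq_cfc, ← cfc_mul .., cfc_congr hspec]
  exact cfc_id' ℝ P hP.isHermitian

theorem sqrtm_transpose (hP : P.PosDef) : (sqrtm hP)ᵀ = sqrtm hP := by
  rw [sqrtm_eq_cfc, ← conjTranspose_eq_transpose_of_trivial, ← star_eq_conjTranspose]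
  exact (cfc_predicate Real.sqrt P).star_eq

theorem isUnit_sqrtm (hP : P.PosDef) : IsUnit (sqrtm hP) := by
  rw [sqrtm_eq_cfc]
  exact (isUnit_cfc_iff _ _ (ha := hP.isHermitian)).mpr fun x hx =>
    (Real.sqrt_pos.mpr (hP.pos_of_mem_spectrum hx)).ne'

end sqrtm

theorem stmt_10 {n : ℕ} {P : Matrix (Fin n) (Fin n) ℝ} (hP : P.PosDef)
    (A : Matrix (Fin n) (Fin n) ℝ) :
    (P⁻¹ * A * P * Aᵀ).trace - (A * A).trace =
      (1 / 2 : ℝ) * frobSq ((sqrtm hP)⁻¹ * A * sqrtm hP - sqrtm hP * Aᵀ * (sqrtm hP)⁻¹) ∧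
    ((P⁻¹ * A * P * Aᵀ).trace = (A * A).trace ↔ ((sqrtm hP)⁻¹ * A * sqrtm hP).IsSymm) := by
  set S := sqrtm hP
  set B := S⁻¹ * A * S
  have hBt : Bᵀ = S * Aᵀ * S⁻¹ := transpose_inv_mul_mul_of_transpose_eq (sqrtm_transpose hP) A
  have hgap : (P⁻¹ * A * P * Aᵀ).trace - (A * A).trace = (1 / 2 : ℝ) * frobSq (B - Bᵀ) := by
    rw [frobSq_sub_transpose, ← sqrtm_mul_self hP,
      trace_inv_sq_mul_mul_sq_mul_transpose (sqrtm_transpose hP),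
      ← trace_inv_mul_mul_mul_self (isUnit_sqrtm hP) A]
    ring
  rw [← hBt]
  refine ⟨hgap, ?_⟩
  rw [← sub_eq_zero, hgap, mul_eq_zero, or_iff_right (by norm_num), frobSq_eq_zero_iff,
    sub_eq_zero, eq_comm]
  rfl
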